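/- arXiv:math/0510578 — 5 statements merged into one kernel-verified Lean document; each statement's English description precedes it below -/
import Mathlib

section
/- Let ρ : ℝ → [-∞, ∞) be upper semicontinuous in the following strong sense: for every α ∈ ℝ, ρ(α) = limsup_{β → α⁻} ρ(β) = limsup_{β → α⁺} ρ(β). Then ρ satisfies the intermediate value property: for all α < β and any real r strictly between ρ(α) and ρ(β), there exists γ ∈ [α, β] with ρ(γ) = r. -/
open Filter Set

lemma neg_map_left (a : ℝ) :
    Filter.map Neg.neg (nhdsWithin a (Set.Iio a)) = nhdsWithin (-a) (Set.Ioi (-a)) := by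
  have : (Neg.neg : ℝ → ℝ) = ⇑(Homeomorph.neg ℝ) := rfl
  rw [this, (Homeomorph.neg ℝ).isEmbedding.map_nhdsWithin_eq]; simp

lemma neg_map_right (a : ℝ) :
    Filter.map Neg.neg (nhdsWithin a (Set.Ioi a)) = nhdsWithin (-a) (Set.Iio (-a)) := by
  have : (Neg.neg : ℝ → ℝ) = ⇑(Homeomorph.neg ℝ) := rfl
  rw [this, (Homeomorph.neg ℝ).isEmbedding.map_nhdsWithin_eq]; simp

lemma key (ρ : ℝ → EReal)
    (hleft : ∀ a : ℝ, ρ a = Filter.limsup ρ (nhdsWithin a (Set.Iio a)))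
    (hright : ∀ a : ℝ, ρ a = Filter.limsup ρ (nhdsWithin a (Set.Ioi a)))
    {α β : ℝ} (hαβ : α < β) {r : ℝ} (h1 : ρ α < (r : EReal)) (h2 : (r : EReal) < ρ β) :
    ∃ γ ∈ Set.Icc α β, ρ γ = (r : EReal) := by
  set S : Set ℝ := {x | x ∈ Icc α β ∧ (r : EReal) ≤ ρ x} with hS
  have hβS : β ∈ S := ⟨⟨hαβ.le, le_rfl⟩, h2.le⟩
  have hSne : S.Nonempty := ⟨β, hβS⟩
  have hbdd : BddBelow S := ⟨α, fun x hx => hx.1.1⟩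
  set γ := sInf S with hγ
  have hγα : α ≤ γ := le_csInf hSne fun x hx => hx.1.1
  have hγβ : γ ≤ β := csInf_le hbdd hβS
  have hev : ∀ᶠ x in nhdsWithin α (Set.Ioi α), ρ x < (r : EReal) := by
    exact eventually_lt_of_limsup_lt (by rw [← hright]; exact h1) (by isBoundedDefault)
  obtain ⟨b, hb, hball⟩ := (nhdsGT_basis α).eventually_iff.mp hev
  have hαγ : α < γ := by
    have hmin : min b β ≤ γ := le_csInf hSne fun x hx => by
      by_contra hlt
      push_neg at hlt
      have hxα : α < x := by
        rcases lt_or_eq_of_le hx.1.1 with h | h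
        · exact h
        · exact absurd (h ▸ hx.2) (not_le.mpr h1)
      exact absurd (hball ⟨hxα, hlt.trans_le (min_le_left _ _)⟩) (not_lt.mpr hx.2)
    exact lt_of_lt_of_le (lt_min hb hαβ) hmin
  have hge : (r : EReal) ≤ ρ γ := by
    by_cases hγS : γ ∈ S
    · exact hγS.2
    · rw [hright γ]
      refine le_limsup_of_frequently_le ?_ (by isBoundedDefault)
      rw [(nhdsGT_basis γ).frequently_iff]
      intro c hc
      obtain ⟨x, hxS, hxc⟩ := (csInf_lt_iff hbdd hSne).mp hc
      exact ⟨x, ⟨lt_of_le_of_ne (csInf_le hbdd hxS) fun h => hγS (h ▸ hxS), hxc⟩, hxS.2⟩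
  have hle : ρ γ ≤ (r : EReal) := by
    rw [hleft γ]
    refine limsup_le_of_le (by isBoundedDefault) ?_
    filter_upwards [Ioo_mem_nhdsLT hαγ] with x hx
    by_contra hlt
    push_neg at hlt
    have hxS : x ∈ S := ⟨⟨hx.1.le, hx.2.le.trans hγβ⟩, hlt.le⟩
    exact absurd (csInf_le hbdd hxS) (not_le.mpr hx.2)
  exact ⟨γ, ⟨hγα, hγβ⟩, le_antisymm hle hge⟩

theorem stmt0 (ρ : ℝ → EReal)
    (htop : ∀ α : ℝ, ρ α < ⊤)
    (hleft : ∀ α : ℝ, ρ α = Filter.limsup ρ (nhdsWithin α (Set.Iio α)))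
    (hright : ∀ α : ℝ, ρ α = Filter.limsup ρ (nhdsWithin α (Set.Ioi α))) :
    ∀ α β : ℝ, α < β → ∀ r : ℝ,
      ((ρ α < (r : EReal) ∧ (r : EReal) < ρ β) ∨ (ρ β < (r : EReal) ∧ (r : EReal) < ρ α)) →
      ∃ γ ∈ Set.Icc α β, ρ γ = (r : EReal) := by
  intro α β hαβ r hcase
  rcases hcase with ⟨h1, h2⟩ | ⟨h1, h2⟩
  · exact key ρ hleft hright hαβ h1 h2
  · set ρ' : ℝ → EReal := ρ ∘ Neg.neg with hρ'
    have hleft' : ∀ a : ℝ, ρ' a = Filter.limsup ρ' (nhdsWithin a (Set.Iio a)) := by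
      intro a
      rw [hρ', Filter.limsup_comp, neg_map_left]
      exact hright (-a)
    have hright' : ∀ a : ℝ, ρ' a = Filter.limsup ρ' (nhdsWithin a (Set.Ioi a)) := by
      intro a
      rw [hρ', Filter.limsup_comp, neg_map_right]
      exact hleft (-a)
    have h1' : ρ' (-β) < (r : EReal) := by simpa [hρ'] using h1
    have h2' : (r : EReal) < ρ' (-α) := by simpa [hρ'] using h2
    obtain ⟨γ, hγ, hργ⟩ := key ρ' hleft' hright' (neg_lt_neg hαβ) h1' h2'
    exact ⟨-γ, ⟨le_neg_of_le_neg hγ.2, neg_le_of_neg_le hγ.1⟩, hργ⟩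
end

section
/- Let h be the Poisson integral in the unit disc of a bounded measurable boundary function φ on the unit circle. If e^{iθ₀} is a point such that the one-sided limits φ(θ₀⁻) = A and φ(θ₀⁺) = B exist, then the radial limit lim_{r→1} h(r e^{iθ₀}) = (A + B)/2. -/
open Filter Set Real MeasureTheory intervalIntegral

/-- The Poisson kernel for the unit disc. -/
noncomputable def poissonKernelDisc (r θ : ℝ) : ℝ :=
  (1 - r ^ 2) / (1 - 2 * r * Real.cos θ + r ^ 2)

/-- The Poisson integral of a `2π`-periodic boundary function `φ`. -/
noncomputable def poissonIntegral (φ : ℝ → ℝ) (r θ : ℝ) : ℝ :=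
  (1 / (2 * Real.pi)) * ∫ t in (0 : ℝ)..(2 * Real.pi), poissonKernelDisc r (θ - t) * φ t

/-!
Folding the integral about `θ₀` by periodicity and evenness of the kernel gives
`h(re^{iθ₀}) = (1/2π) ∫₀^π P_r(s) (φ(θ₀ - s) + φ(θ₀ + s)) ds`. The kernel is nonnegative with mass
`π` on `[0, π]`, decreasing in `s` there, and `P_r(δ) → 0` as `r → 1` for every `δ > 0`, so it
concentrates at `s = 0`; hence the folded integral tends to `π` times the limit `A + B` of the
integrand at `0⁺`.
-/

open Topology

section OrderedGroup

variable {α : Type*} [AddCommGroup α] [LinearOrder α] [IsOrderedAddMonoid α] [TopologicalSpace α]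
  [IsTopologicalAddGroup α]

lemma tendsto_const_sub_nhdsGT_zero (a : α) : Tendsto (a - ·) (𝓝[>] 0) (𝓝[<] a) := by
  refine tendsto_nhdsWithin_iff.2 ⟨?_, eventually_mem_nhdsWithin.mono fun s hs => sub_lt_self a hs⟩
  simpa using ((continuous_sub_left a).tendsto 0).mono_left nhdsWithin_le_nhds

lemma tendsto_const_add_nhdsGT_zero (a : α) : Tendsto (a + ·) (𝓝[>] 0) (𝓝[>] a) := by
  refine tendsto_nhdsWithin_iff.2
    ⟨?_, eventually_mem_nhdsWithin.mono fun s hs => lt_add_of_pos_right a hs⟩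
  simpa using ((continuous_const_add a).tendsto 0).mono_left nhdsWithin_le_nhds

end OrderedGroup

lemma one_sub_two_mul_cos_add_sq_pos {r : ℝ} (hr : |r| < 1) (t : ℝ) :
    0 < 1 - 2 * r * cos t + r ^ 2 := by
  have hrc : r * cos t ≤ |r| := by
    calc r * cos t ≤ |r * cos t| := le_abs_self _
      _ ≤ |r| := by rw [abs_mul]; exact mul_le_of_le_one_right (abs_nonneg r) (abs_cos_le_one t)
  nlinarith [sq_abs r, abs_nonneg r]

lemma poissonKernelDisc_nonneg {r : ℝ} (hr : |r| < 1) (t : ℝ) : 0 ≤ poissonKernelDisc r t := by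
  have : r ^ 2 < 1 := by simpa using sq_lt_one_iff_abs_lt_one r |>.2 hr
  exact div_nonneg (by linarith) (one_sub_two_mul_cos_add_sq_pos hr t).le

lemma continuous_poissonKernelDisc {r : ℝ} (hr : |r| < 1) : Continuous (poissonKernelDisc r) :=
  continuous_const.div (by fun_prop) (one_sub_two_mul_cos_add_sq_pos hr · |>.ne')

lemma poissonKernelDisc_periodic (r : ℝ) : Function.Periodic (poissonKernelDisc r) (2 * π) := by
  simp [Function.Periodic, poissonKernelDisc]

lemma poissonKernelDisc_neg (r t : ℝ) : poissonKernelDisc r (-t) = poissonKernelDisc r t := by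
  simp [poissonKernelDisc]

lemma poissonKernelDisc_le_of_cos_le {r s t : ℝ} (hr₀ : 0 ≤ r) (hr₁ : r < 1) (h : cos t ≤ cos s) :
    poissonKernelDisc r t ≤ poissonKernelDisc r s := by
  have hr : |r| < 1 := abs_lt.2 ⟨by linarith, hr₁⟩
  exact div_le_div_of_nonneg_left (by nlinarith) (one_sub_two_mul_cos_add_sq_pos hr s)
    (by nlinarith)

lemma tendsto_poissonKernelDisc_nhds_one {s : ℝ} (hs : cos s ≠ 1) :
    Tendsto (poissonKernelDisc · s) (𝓝 1) (𝓝 0) := by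
  have hden : (1 : ℝ) - 2 * 1 * cos s + 1 ^ 2 ≠ 0 := by
    contrapose! hs; linarith
  have h : ContinuousAt (poissonKernelDisc · s) 1 :=
    ((continuous_const.sub (continuous_pow 2)).continuousAt).div (by fun_prop) hden
  simpa [poissonKernelDisc] using h.tendsto

lemma poissonKernelDisc_eq_poissonKernel (r θ : ℝ) :
    poissonKernelDisc r θ = poissonKernel 0 r (circleMap 0 1 θ) := by
  have hnorm : ‖circleMap 0 1 θ - r‖ ^ 2 = 1 - 2 * r * cos θ + r ^ 2 := by
    rw [← Complex.normSq_eq_norm_sq, Complex.normSq_apply]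
    simp [circleMap, Complex.exp_ofReal_mul_I_re, Complex.exp_ofReal_mul_I_im]
    nlinarith [sin_sq_add_cos_sq θ]
  simp [poissonKernel, poissonKernelDisc, hnorm]

lemma integral_poissonKernelDisc {r : ℝ} (hr : |r| < 1) :
    ∫ θ in (0 : ℝ)..2 * π, poissonKernelDisc r θ = 2 * π := by
  -- Poisson's formula for the constant function `1`
  have h := (diffContOnCl_const (c := (1 : ℂ))).circleAverage_poissonKernel_smul
    (w := (r : ℂ)) (c := 0) (R := 1) (by simpa using hr)
  simp only [Real.circleAverage_def, Pi.smul_apply', Complex.real_smul, mul_one,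
    ← poissonKernelDisc_eq_poissonKernel, intervalIntegral.integral_ofReal, ← Complex.ofReal_mul,
    Complex.ofReal_eq_one] at h
  have := pi_pos
  field_simp at h
  linarith

lemma intervalIntegral.integral_neg_self_eq_integral_add_comp_neg {E : Type*}
    [NormedAddCommGroup E] [NormedSpace ℝ E] {f : ℝ → E} {a : ℝ}
    (hf : IntervalIntegrable f volume (-a) a) :
    ∫ x in -a..a, f x = ∫ x in 0..a, (f x + f (-x)) := by
  have h₀ : (0 : ℝ) ∈ uIcc (-a) a := by rcases le_total 0 a with h | h <;> simp [h]
  have h₁ : IntervalIntegrable f volume (-a) 0 := hf.mono_set (uIcc_subset_uIcc_left h₀)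
  have h₂ : IntervalIntegrable f volume 0 a := hf.mono_set (uIcc_subset_uIcc_right h₀)
  have h₃ : IntervalIntegrable (fun x => f (-x)) volume 0 a := by
    simpa using ((IntervalIntegrable.iff_comp_neg (by finiteness)).1 h₁).symm
  rw [← integral_add_adjacent_intervals h₁ h₂, integral_add h₂ h₃, integral_comp_neg, neg_zero,
    add_comm]

lemma integral_poissonKernelDisc_zero_pi {r : ℝ} (hr : |r| < 1) :
    ∫ θ in (0 : ℝ)..π, poissonKernelDisc r θ = π := by
  have h := (poissonKernelDisc_periodic r).intervalIntegral_add_eq (-π) 0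
  rw [zero_add, integral_poissonKernelDisc hr, show -π + 2 * π = π by ring,
    intervalIntegral.integral_neg_self_eq_integral_add_comp_neg
      ((continuous_poissonKernelDisc hr).intervalIntegrable _ _)] at h
  simp only [poissonKernelDisc_neg, ← two_mul, intervalIntegral.integral_const_mul] at h
  linarith

lemma poissonIntegral_eq_integral_zero_pi {φ : ℝ → ℝ} (hper : Function.Periodic φ (2 * π))
    (hφ : ∀ a b, IntervalIntegrable φ volume a b) {r : ℝ} (hr : |r| < 1) (θ₀ : ℝ) :
    poissonIntegral φ r θ₀ =
      1 / (2 * π) * ∫ s in 0..π, poissonKernelDisc r s * (φ (θ₀ - s) + φ (θ₀ + s)) := by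
  set F : ℝ → ℝ := fun s => poissonKernelDisc r s * φ (θ₀ - s)
  have hF : Function.Periodic F (2 * π) :=
    (poissonKernelDisc_periodic r).mul (hper.const_sub θ₀)
  have hFi : IntervalIntegrable F volume (-π) π := by
    have : IntervalIntegrable (fun s => φ (θ₀ - s)) volume (-π) π := by
      simpa using (hφ (θ₀ + π) (θ₀ - π)).comp_sub_left θ₀
    exact this.continuousOn_mul (continuous_poissonKernelDisc hr).continuousOn
  calc poissonIntegral φ r θ₀ = 1 / (2 * π) * ∫ s in (θ₀ - 2 * π)..(θ₀ - 0), F s := by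
        rw [poissonIntegral, ← intervalIntegral.integral_comp_sub_left F θ₀]
        simp [F]
    _ = 1 / (2 * π) * ∫ s in -π..π, F s := by
        have h := hF.intervalIntegral_add_eq (θ₀ - 2 * π) (-π)
        rw [sub_add_cancel, show -π + 2 * π = π by ring] at h
        rw [sub_zero, h]
    _ = _ := by
        rw [intervalIntegral.integral_neg_self_eq_integral_add_comp_neg hFi]
        simp [F, poissonKernelDisc_neg, mul_add]

lemma abs_integral_poissonKernelDisc_mul_le {r δ ε : ℝ} {ψ : ℝ → ℝ} (hr₀ : 0 ≤ r) (hr₁ : r < 1)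
    (hδ₀ : 0 ≤ δ) (hε : 0 ≤ ε) (hψ : ∀ s ∈ Ioo 0 δ, |ψ s| ≤ ε)
    (hψi : IntervalIntegrable ψ volume 0 π) :
    |∫ s in 0..π, poissonKernelDisc r s * ψ s| ≤
      ε * π + poissonKernelDisc r δ * ∫ s in 0..π, |ψ s| := by
  have hr : |r| < 1 := abs_lt.2 ⟨by linarith, hr₁⟩
  have hP := poissonKernelDisc_nonneg hr
  have hbound : ∀ s ∈ Ioc 0 π, ‖poissonKernelDisc r s * ψ s‖ ≤
      ε * poissonKernelDisc r s + poissonKernelDisc r δ * |ψ s| := by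
    rintro s ⟨hs₀, hsπ⟩
    rw [Real.norm_eq_abs, abs_mul, abs_of_nonneg (hP s)]
    rcases lt_or_ge s δ with hsδ | hδs
    · have := mul_le_mul_of_nonneg_left (hψ s ⟨hs₀, hsδ⟩) (hP s)
      nlinarith [mul_nonneg (hP δ) (abs_nonneg (ψ s))]
    · have := poissonKernelDisc_le_of_cos_le hr₀ hr₁ (cos_le_cos_of_nonneg_of_le_pi hδ₀ hsπ hδs)
      nlinarith [hP s, abs_nonneg (ψ s)]
  have hPi := (continuous_poissonKernelDisc hr).intervalIntegrable (μ := volume) 0 π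
  calc |∫ s in 0..π, poissonKernelDisc r s * ψ s|
      ≤ ∫ s in 0..π, (ε * poissonKernelDisc r s + poissonKernelDisc r δ * |ψ s|) :=
        intervalIntegral.norm_integral_le_of_norm_le pi_pos.le (ae_of_all _ hbound)
          ((hPi.const_mul ε).add (hψi.abs.const_mul _))
    _ = ε * π + poissonKernelDisc r δ * ∫ s in 0..π, |ψ s| := by
        rw [intervalIntegral.integral_add (hPi.const_mul ε) (hψi.abs.const_mul _),
          intervalIntegral.integral_const_mul, intervalIntegral.integral_const_mul,
          integral_poissonKernelDisc_zero_pi hr]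

lemma tendsto_integral_poissonKernelDisc_mul_of_tendsto_zero {ψ : ℝ → ℝ}
    (hψi : IntervalIntegrable ψ volume 0 π) (hψ : Tendsto ψ (𝓝[>] 0) (𝓝 0)) :
    Tendsto (fun r => ∫ s in 0..π, poissonKernelDisc r s * ψ s) (𝓝[<] 1) (𝓝 0) := by
  rw [Metric.tendsto_nhds]
  intro ε hε
  have hε' : 0 < ε / (2 * π) := by positivity
  obtain ⟨δ₁, hδ₁, hψδ⟩ := mem_nhdsGT_iff_exists_Ioo_subset.1 (hψ (Metric.ball_mem_nhds 0 hε'))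
  set δ := min δ₁ π
  have hδ : 0 < δ := lt_min hδ₁ pi_pos
  have hcos : cos δ ≠ 1 := by
    rw [Ne, cos_eq_one_iff_of_lt_of_lt (by linarith [pi_pos]) (by linarith [min_le_right δ₁ π])]
    exact hδ.ne'
  have hfar : ∀ᶠ r in 𝓝[<] 1, poissonKernelDisc r δ * ∫ s in 0..π, |ψ s| < ε / 2 := by
    have := ((tendsto_poissonKernelDisc_nhds_one hcos).mul_const (∫ s in 0..π, |ψ s|)).mono_left
      (nhdsWithin_le_nhds (s := Iio 1))
    exact this.eventually (gt_mem_nhds (by simpa using half_pos hε))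
  filter_upwards [hfar, Ioo_mem_nhdsLT zero_lt_one] with r hfar_r hr
  have hnear : ∀ s ∈ Ioo 0 δ, |ψ s| ≤ ε / (2 * π) := fun s hs => by
    have h := hψδ ⟨hs.1, hs.2.trans_le (min_le_left _ _)⟩
    rw [mem_preimage, Metric.mem_ball, Real.dist_eq, sub_zero] at h
    exact h.le
  have hbound := abs_integral_poissonKernelDisc_mul_le hr.1.le hr.2 hδ.le hε'.le hnear hψi
  have hhalf : ε / (2 * π) * π = ε / 2 := by field_simp
  rw [Real.dist_eq, sub_zero]
  linarith

theorem tendsto_integral_poissonKernelDisc_mul {g : ℝ → ℝ} {L : ℝ}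
    (hgi : IntervalIntegrable g volume 0 π) (hg : Tendsto g (𝓝[>] 0) (𝓝 L)) :
    Tendsto (fun r => ∫ s in 0..π, poissonKernelDisc r s * g s) (𝓝[<] 1) (𝓝 (π * L)) := by
  have h₀ := tendsto_integral_poissonKernelDisc_mul_of_tendsto_zero
    (hgi.sub intervalIntegrable_const) (by simpa using hg.sub_const L)
  have h₁ : Tendsto (fun r => (∫ s in 0..π, poissonKernelDisc r s * (g s - L)) + π * L)
      (𝓝[<] 1) (𝓝 (π * L)) := by simpa using h₀.add_const (π * L)
  refine h₁.congr' ?_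
  filter_upwards [Ioo_mem_nhdsLT (show (-1 : ℝ) < 1 by norm_num)] with r hr
  have hr : |r| < 1 := abs_lt.2 hr
  have hP := continuous_poissonKernelDisc hr
  simp_rw [mul_sub]
  rw [intervalIntegral.integral_sub (hgi.continuousOn_mul hP.continuousOn)
    ((hP.intervalIntegrable 0 π).mul_const L), intervalIntegral.integral_mul_const,
    integral_poissonKernelDisc_zero_pi hr]
  ring

theorem stmt4 (φ : ℝ → ℝ) (C : ℝ)
    (hper : ∀ t : ℝ, φ (t + 2 * Real.pi) = φ t)
    (hbdd : ∀ t : ℝ, |φ t| ≤ C)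
    (hmeas : Measurable φ)
    (θ₀ A B : ℝ)
    (hA : Filter.Tendsto φ (nhdsWithin θ₀ (Set.Iio θ₀)) (nhds A))
    (hB : Filter.Tendsto φ (nhdsWithin θ₀ (Set.Ioi θ₀)) (nhds B)) :
    Filter.Tendsto (fun r : ℝ => poissonIntegral φ r θ₀)
      (nhdsWithin 1 (Set.Iio 1)) (nhds ((A + B) / 2)) := by
  have hφi : ∀ a b, IntervalIntegrable φ volume a b := fun a b =>
    intervalIntegrable_const.mono_fun' hmeas.aestronglyMeasurable (ae_of_all _ hbdd)
  have hgi : IntervalIntegrable (fun s => φ (θ₀ - s) + φ (θ₀ + s)) volume 0 π := by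
    refine IntervalIntegrable.add ?_ ?_
    · simpa using (hφi θ₀ (θ₀ - π)).comp_sub_left θ₀
    · simpa using (hφi θ₀ (θ₀ + π)).comp_add_left θ₀
  have hg : Tendsto (fun s => φ (θ₀ - s) + φ (θ₀ + s)) (𝓝[>] 0) (𝓝 (A + B)) :=
    (hA.comp (tendsto_const_sub_nhdsGT_zero θ₀)).add (hB.comp (tendsto_const_add_nhdsGT_zero θ₀))
  have hlim := (tendsto_integral_poissonKernelDisc_mul hgi hg).const_mul (1 / (2 * π))
  rw [show 1 / (2 * π) * (π * (A + B)) = (A + B) / 2 by field_simp] at hlim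
  refine hlim.congr' ?_
  filter_upwards [Ioo_mem_nhdsLT (show (-1 : ℝ) < 1 by norm_num)] with r hr
  exact (poissonIntegral_eq_integral_zero_pi hper hφi (abs_lt.2 hr) θ₀).symm
end

section
/- Let f be holomorphic on a neighborhood of 0 with f(0) = 0 and f'(0) = λ where 0 < |λ| < 1. Then there exists a unique holomorphic map h defined near 0 with h(0) = 0, h'(0) = 1, and h(f(z)) = λ h(z) for all z near 0. -/
/-!
Write `f z = λ z + O(z²)` and pick `|λ| < c < √|λ|`. On a small ball `|f z| ≤ c |z|`, so the
iterates `fⁿ z` stay in the ball and are `O(cⁿ)`. The Koenigs approximants `fⁿ z / λⁿ` then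
differ successively by `O((c² / |λ|)ⁿ)`, hence converge uniformly to a holomorphic `h`, and
`fⁿ (f z) / λⁿ = λ · fⁿ⁺¹ z / λⁿ⁺¹` passes to the limit as `h ∘ f = λ h`.
Two normalized solutions agree because their ratio is constant along orbits, which tend to the
fixed point, where the ratio is `1`.
-/

open Filter Topology Metric Set Asymptotics

section Taylor

variable {𝕜 E : Type*} [NontriviallyNormedField 𝕜] [NormedAddCommGroup E] [NormedSpace 𝕜 E]
  {f : 𝕜 → E} {a : 𝕜}

theorem AnalyticAt.dslope (hf : AnalyticAt 𝕜 f a) : AnalyticAt 𝕜 (_root_.dslope f a) a := by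
  obtain ⟨p, hp⟩ := hf
  exact ⟨p.fslope, hp.has_fpower_series_dslope_fslope⟩

theorem sub_sub_smul_deriv_eq_sq_smul_dslope_dslope (f : 𝕜 → E) (a z : 𝕜) :
    f z - f a - (z - a) • deriv f a = (z - a) ^ 2 • dslope (dslope f a) a z := by
  rw [← sub_smul_dslope, ← dslope_same, ← smul_sub, ← sub_smul_dslope, smul_smul, sq]

theorem AnalyticAt.isBigO_sub_sub_smul_deriv (hf : AnalyticAt 𝕜 f a) :
    (fun z => f z - f a - (z - a) • deriv f a) =O[𝓝 a] fun z => (z - a) ^ 2 := by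
  have hcont : ContinuousAt (_root_.dslope (_root_.dslope f a) a) a :=
    continuousAt_dslope_same.2 hf.dslope.differentiableAt
  simp_rw [sub_sub_smul_deriv_eq_sq_smul_dslope_dslope]
  exact ((isBigO_refl _ _).smul (hcont.tendsto.isBigO_one 𝕜)).congr_right fun _ => mul_one _

end Taylor

section Contraction

variable {E : Type*} [SeminormedAddCommGroup E] {f : E → E} {c r : ℝ}

theorem mapsTo_ball_of_norm_le_mul (hc : c ≤ 1) (hf : ∀ z ∈ ball (0 : E) r, ‖f z‖ ≤ c * ‖z‖) :
    MapsTo f (ball 0 r) (ball 0 r) := by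
  intro z hz
  rw [mem_ball_zero_iff] at hz ⊢
  nlinarith [hf z (mem_ball_zero_iff.2 hz), norm_nonneg z]

theorem norm_iterate_le_pow_mul (hc0 : 0 ≤ c) (hc1 : c ≤ 1)
    (hf : ∀ z ∈ ball (0 : E) r, ‖f z‖ ≤ c * ‖z‖) {z : E} (hz : z ∈ ball 0 r) (n : ℕ) :
    ‖f^[n] z‖ ≤ c ^ n * ‖z‖ := by
  induction n with
  | zero => simp
  | succ n ih =>
    rw [Function.iterate_succ_apply', pow_succ']
    calc ‖f (f^[n] z)‖ ≤ c * ‖f^[n] z‖ := hf _ ((mapsTo_ball_of_norm_le_mul hc1 hf).iterate n hz)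
      _ ≤ c * (c ^ n * ‖z‖) := by gcongr
      _ = c * c ^ n * ‖z‖ := by ring

theorem tendsto_iterate_of_norm_le_mul (hc0 : 0 ≤ c) (hc1 : c < 1)
    (hf : ∀ z ∈ ball (0 : E) r, ‖f z‖ ≤ c * ‖z‖) {z : E} (hz : z ∈ ball 0 r) :
    Tendsto (fun n => f^[n] z) atTop (𝓝 0) := by
  rw [tendsto_zero_iff_norm_tendsto_zero]
  refine squeeze_zero (fun _ => norm_nonneg _) (norm_iterate_le_pow_mul hc0 hc1.le hf hz) ?_
  simpa using (tendsto_pow_atTop_nhds_zero_of_lt_one hc0 hc1).mul_const ‖z‖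

end Contraction

theorem tendstoUniformlyOn_of_summable_norm_sub {α E : Type*} [NormedAddCommGroup E]
    [CompleteSpace E] {F : ℕ → α → E} {u : ℕ → ℝ} (hu : Summable u) {s : Set α}
    (hF : ∀ n, ∀ x ∈ s, ‖F (n + 1) x - F n x‖ ≤ u n) :
    TendstoUniformlyOn F (fun x => F 0 x + ∑' n, (F (n + 1) x - F n x)) atTop s := by
  have hsum := tendstoUniformlyOn_tsum_nat hu hF
  rw [Metric.tendstoUniformlyOn_iff] at hsum ⊢
  intro ε hε
  filter_upwards [hsum ε hε] with N hN x hx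
  have := hN x hx
  rw [Finset.sum_range_sub (F · x), dist_eq_norm] at this
  rw [dist_eq_norm]
  convert this using 2
  abel

section Linearization

variable {𝕜 : Type*} [NontriviallyNormedField 𝕜] {f h : 𝕜 → 𝕜} {lam : 𝕜} {U : Set 𝕜}

theorem apply_iterate_eq_pow_mul (hU : MapsTo f U U) (he : ∀ z ∈ U, h (f z) = lam * h z)
    {z : 𝕜} (hz : z ∈ U) (n : ℕ) : h (f^[n] z) = lam ^ n * h z := by
  induction n with
  | zero => simp
  | succ n ih => rw [Function.iterate_succ_apply', he _ (hU.iterate n hz), ih, pow_succ', mul_assoc]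

/-- With `ψᵢ = dslope hᵢ 0`, so that `hᵢ w = w * ψᵢ w`, the iterated functional equations give
`h₁ z * ψ₂ (fⁿ z) = h₂ z * ψ₁ (fⁿ z)`, and both `ψᵢ (fⁿ z)` tend to `deriv hᵢ 0 = 1`. -/
theorem eqOn_of_apply_eq_mul (hU : MapsTo f U U)
    (horbit : ∀ z ∈ U, Tendsto (fun n => f^[n] z) atTop (𝓝 0)) (hlam : lam ≠ 0)
    {h₁ h₂ : 𝕜 → 𝕜} (hd₁ : DifferentiableAt 𝕜 h₁ 0) (hd₂ : DifferentiableAt 𝕜 h₂ 0)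
    (h₁0 : h₁ 0 = 0) (h₂0 : h₂ 0 = 0) (h₁' : deriv h₁ 0 = 1) (h₂' : deriv h₂ 0 = 1)
    (he₁ : ∀ z ∈ U, h₁ (f z) = lam * h₁ z) (he₂ : ∀ z ∈ U, h₂ (f z) = lam * h₂ z) :
    EqOn h₁ h₂ U := by
  intro z hz
  have hrep : ∀ {g : 𝕜 → 𝕜}, g 0 = 0 → ∀ w, g w = w * dslope g 0 w := fun {g} g0 w => by
    simpa [g0] using (sub_smul_dslope g 0 w).symm
  have hcross : ∀ n, h₁ z * dslope h₂ 0 (f^[n] z) = h₂ z * dslope h₁ 0 (f^[n] z) := fun n => by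
    refine mul_left_cancel₀ (pow_ne_zero n hlam) ?_
    rw [← mul_assoc, ← mul_assoc, ← apply_iterate_eq_pow_mul hU he₁ hz,
      ← apply_iterate_eq_pow_mul hU he₂ hz, hrep h₁0, hrep h₂0]
    ring
  have hlim : ∀ {g : 𝕜 → 𝕜}, DifferentiableAt 𝕜 g 0 → deriv g 0 = 1 →
      Tendsto (fun n => dslope g 0 (f^[n] z)) atTop (𝓝 1) := fun hd g' => by
    simpa [g', Function.comp_def] using (continuousAt_dslope_same.2 hd).tendsto.comp (horbit z hz)
  simpa using tendsto_nhds_unique (((hlim hd₂ h₂').const_mul (h₁ z)).congr hcross)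
    ((hlim hd₁ h₁').const_mul (h₂ z))

end Linearization

section KoenigsSequence

variable {𝕜 : Type*} [NontriviallyNormedField 𝕜] {f : 𝕜 → 𝕜} {lam : 𝕜} {c K r : ℝ}

def koenigsSeq (f : 𝕜 → 𝕜) (lam : 𝕜) (n : ℕ) (z : 𝕜) : 𝕜 := f^[n] z / lam ^ n

theorem koenigsSeq_apply_map (hlam : lam ≠ 0) (n : ℕ) (z : 𝕜) :
    koenigsSeq f lam n (f z) = lam * koenigsSeq f lam (n + 1) z := by
  rw [koenigsSeq, koenigsSeq, ← Function.iterate_succ_apply, pow_succ']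
  field_simp

theorem koenigsSeq_zero_right (hf0 : f 0 = 0) (n : ℕ) : koenigsSeq f lam n 0 = 0 := by
  simp [koenigsSeq, Function.iterate_fixed hf0]

theorem hasDerivAt_koenigsSeq (hf : HasDerivAt f lam 0) (hf0 : f 0 = 0) (hlam : lam ≠ 0)
    (n : ℕ) : HasDerivAt (koenigsSeq f lam n) 1 0 := by
  have := (HasDerivAt.iterate 0 hf hf0 n).div_const (lam ^ n)
  rwa [div_self (pow_ne_zero n hlam)] at this

theorem koenigsSeq_succ_sub (hlam : lam ≠ 0) (n : ℕ) (z : 𝕜) :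
    koenigsSeq f lam (n + 1) z - koenigsSeq f lam n z =
      (f (f^[n] z) - lam * f^[n] z) / lam ^ (n + 1) := by
  rw [koenigsSeq, koenigsSeq, Function.iterate_succ_apply', pow_succ]
  field_simp

theorem norm_koenigsSeq_succ_sub_le (hlam : lam ≠ 0) (hc0 : 0 ≤ c) (hc1 : c ≤ 1) (hK : 0 ≤ K)
    (hquad : ∀ z ∈ ball (0 : 𝕜) r, ‖f z - lam * z‖ ≤ K * ‖z‖ ^ 2)
    (hcontr : ∀ z ∈ ball (0 : 𝕜) r, ‖f z‖ ≤ c * ‖z‖) {z : 𝕜} (hz : z ∈ ball 0 r) (n : ℕ) :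
    ‖koenigsSeq f lam (n + 1) z - koenigsSeq f lam n z‖ ≤
      K * r ^ 2 / ‖lam‖ * (c ^ 2 / ‖lam‖) ^ n := by
  have hw : ‖f^[n] z‖ ≤ c ^ n * r :=
    (norm_iterate_le_pow_mul hc0 hc1 hcontr hz n).trans
      (by gcongr; exact (mem_ball_zero_iff.1 hz).le)
  rw [koenigsSeq_succ_sub hlam, norm_div, norm_pow, div_le_iff₀ (by positivity)]
  calc ‖f (f^[n] z) - lam * f^[n] z‖
      ≤ K * ‖f^[n] z‖ ^ 2 := hquad _ ((mapsTo_ball_of_norm_le_mul hc1 hcontr).iterate n hz)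
    _ ≤ K * (c ^ n * r) ^ 2 := by gcongr
    _ = K * r ^ 2 / ‖lam‖ * (c ^ 2 / ‖lam‖) ^ n * ‖lam‖ ^ (n + 1) := by
      rw [div_pow, pow_succ]
      field_simp
      ring

theorem tendstoUniformlyOn_koenigsSeq [CompleteSpace 𝕜] (hlam : lam ≠ 0) (hc0 : 0 ≤ c)
    (hc1 : c ≤ 1) (hcl : c ^ 2 < ‖lam‖) (hK : 0 ≤ K)
    (hquad : ∀ z ∈ ball (0 : 𝕜) r, ‖f z - lam * z‖ ≤ K * ‖z‖ ^ 2)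
    (hcontr : ∀ z ∈ ball (0 : 𝕜) r, ‖f z‖ ≤ c * ‖z‖) :
    TendstoUniformlyOn (koenigsSeq f lam) (fun z => koenigsSeq f lam 0 z +
      ∑' n, (koenigsSeq f lam (n + 1) z - koenigsSeq f lam n z)) atTop (ball 0 r) := by
  have hratio : c ^ 2 / ‖lam‖ < 1 := (div_lt_one (norm_pos_iff.2 hlam)).2 hcl
  exact tendstoUniformlyOn_of_summable_norm_sub
    ((summable_geometric_of_lt_one (by positivity) hratio).mul_left _)
    fun n _ hz => norm_koenigsSeq_succ_sub_le hlam hc0 hc1 hK hquad hcontr hz n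

end KoenigsSequence

section Koenigs

variable {f : ℂ → ℂ} {lam : ℂ} {c K r : ℝ}

theorem exists_linearization_on_ball (hr : 0 < r) (hdiff : DifferentiableOn ℂ f (ball 0 r))
    (hf' : HasDerivAt f lam 0) (hf0 : f 0 = 0) (hlam : lam ≠ 0) (hc0 : 0 ≤ c) (hc1 : c ≤ 1)
    (hcl : c ^ 2 < ‖lam‖) (hK : 0 ≤ K)
    (hquad : ∀ z ∈ ball (0 : ℂ) r, ‖f z - lam * z‖ ≤ K * ‖z‖ ^ 2)
    (hcontr : ∀ z ∈ ball (0 : ℂ) r, ‖f z‖ ≤ c * ‖z‖) :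
    ∃ h : ℂ → ℂ, AnalyticAt ℂ h 0 ∧ h 0 = 0 ∧ deriv h 0 = 1 ∧
      ∀ z ∈ ball (0 : ℂ) r, h (f z) = lam * h z := by
  have hmaps := mapsTo_ball_of_norm_le_mul hc1 hcontr
  have hunif := tendstoUniformlyOn_koenigsSeq hlam hc0 hc1 hcl hK hquad hcontr
  have hlocal := hunif.tendstoLocallyUniformlyOn
  have hseq : ∀ᶠ n in atTop, DifferentiableOn ℂ (koenigsSeq f lam n) (ball 0 r) :=
    Eventually.of_forall fun n => (hdiff.iterate hmaps n).div_const _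
  have h0 := mem_ball_self (x := (0 : ℂ)) hr
  refine ⟨_, (hlocal.differentiableOn hseq isOpen_ball).analyticAt (ball_mem_nhds 0 hr), ?_, ?_, ?_⟩
  · refine tendsto_nhds_unique (hunif.tendsto_at h0) ?_
    simp [koenigsSeq_zero_right hf0]
  · refine tendsto_nhds_unique ((hlocal.deriv hseq isOpen_ball).tendsto_at h0) ?_
    simp [(hasDerivAt_koenigsSeq hf' hf0 hlam _).deriv]
  · intro z hz
    refine tendsto_nhds_unique (hunif.tendsto_at (hmaps hz)) ?_
    simpa only [koenigsSeq_apply_map hlam, Function.comp_def] using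
      ((hunif.tendsto_at hz).comp (tendsto_add_atTop_nat 1)).const_mul lam

theorem AnalyticAt.eventually_norm_sub_le_and_norm_le (hf : AnalyticAt ℂ f 0) (hf0 : f 0 = 0)
    (hc : ‖deriv f 0‖ < c) : ∃ K, 0 ≤ K ∧ ∀ᶠ z in 𝓝 0,
      ‖f z - deriv f 0 * z‖ ≤ K * ‖z‖ ^ 2 ∧ ‖f z‖ ≤ c * ‖z‖ := by
  obtain ⟨K, hK, hbound⟩ := hf.isBigO_sub_sub_smul_deriv.exists_pos
  have hsmall : ∀ᶠ z in 𝓝 (0 : ℂ), K * ‖z‖ < c - ‖deriv f 0‖ :=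
    (continuous_const.mul continuous_norm).continuousAt.eventually_lt continuousAt_const
      (by simpa using hc)
  refine ⟨K, hK.le, ?_⟩
  filter_upwards [hbound.bound, hsmall] with z hz hzK
  simp only [hf0, sub_zero, smul_eq_mul, norm_pow, mul_comm z] at hz
  refine ⟨hz, ?_⟩
  calc ‖f z‖ ≤ ‖f z - deriv f 0 * z‖ + ‖deriv f 0 * z‖ := norm_le_norm_sub_add _ _
    _ ≤ K * ‖z‖ ^ 2 + ‖deriv f 0‖ * ‖z‖ := by rw [norm_mul]; gcongr
    _ ≤ c * ‖z‖ := by nlinarith [norm_nonneg z]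

theorem eventuallyEq_of_apply_eq_mul (hc0 : 0 ≤ c) (hc1 : c < 1)
    (hcontr : ∀ᶠ z in 𝓝 0, ‖f z‖ ≤ c * ‖z‖) (hlam : lam ≠ 0) {h₁ h₂ : ℂ → ℂ}
    (hd₁ : DifferentiableAt ℂ h₁ 0) (hd₂ : DifferentiableAt ℂ h₂ 0)
    (h₁0 : h₁ 0 = 0) (h₂0 : h₂ 0 = 0) (h₁' : deriv h₁ 0 = 1) (h₂' : deriv h₂ 0 = 1)
    (he₁ : ∀ᶠ z in 𝓝 0, h₁ (f z) = lam * h₁ z) (he₂ : ∀ᶠ z in 𝓝 0, h₂ (f z) = lam * h₂ z) :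
    h₁ =ᶠ[𝓝 0] h₂ := by
  obtain ⟨ρ, hρ, hball⟩ := nhds_basis_ball.eventually_iff.1 ((hcontr.and he₁).and he₂)
  have hcontrρ : ∀ z ∈ ball (0 : ℂ) ρ, ‖f z‖ ≤ c * ‖z‖ := fun z hz => (hball hz).1.1
  exact eventually_of_mem (ball_mem_nhds 0 hρ) <|
    eqOn_of_apply_eq_mul (mapsTo_ball_of_norm_le_mul hc1.le hcontrρ)
      (fun z hz => tendsto_iterate_of_norm_le_mul hc0 hc1 hcontrρ hz) hlam hd₁ hd₂ h₁0 h₂0 h₁' h₂'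
      (fun z hz => (hball hz).1.2) fun z hz => (hball hz).2

end Koenigs

/-- Koenigs linearization at an attracting, non-superattracting fixed point,
together with uniqueness of the normalized linearizing map. -/
theorem stmt9 (f : ℂ → ℂ) (lam : ℂ)
    (hf : AnalyticAt ℂ f 0) (hf0 : f 0 = 0) (hf' : deriv f 0 = lam)
    (hlam0 : 0 < ‖lam‖) (hlam1 : ‖lam‖ < 1) :
    (∃ h : ℂ → ℂ, AnalyticAt ℂ h 0 ∧ h 0 = 0 ∧ deriv h 0 = 1 ∧
      ∀ᶠ z in nhds (0 : ℂ), h (f z) = lam * h z) ∧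
    (∀ h₁ h₂ : ℂ → ℂ,
      (AnalyticAt ℂ h₁ 0 ∧ h₁ 0 = 0 ∧ deriv h₁ 0 = 1 ∧
        ∀ᶠ z in nhds (0 : ℂ), h₁ (f z) = lam * h₁ z) →
      (AnalyticAt ℂ h₂ 0 ∧ h₂ 0 = 0 ∧ deriv h₂ 0 = 1 ∧
        ∀ᶠ z in nhds (0 : ℂ), h₂ (f z) = lam * h₂ z) →
      ∀ᶠ z in nhds (0 : ℂ), h₁ z = h₂ z) := by
  have hlam : lam ≠ 0 := norm_pos_iff.1 hlam0
  -- `‖lam‖ < c < √‖lam‖` makes `f` contract by `c` while `c ^ 2 / ‖lam‖ < 1`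
  obtain ⟨c, hlamc, hcsqrt⟩ := exists_between ((Real.lt_sqrt hlam0.le).2 (by nlinarith))
  have hc0 : 0 ≤ c := hlam0.le.trans hlamc.le
  have hc1 : c < 1 := hcsqrt.trans ((Real.sqrt_lt' one_pos).2 (by simpa using hlam1))
  have hcl : c ^ 2 < ‖lam‖ := (Real.lt_sqrt hc0).1 hcsqrt
  obtain ⟨K, hK, hbounds⟩ := hf.eventually_norm_sub_le_and_norm_le hf0 (hf' ▸ hlamc)
  rw [hf'] at hbounds
  refine ⟨?_, fun h₁ h₂ ⟨ha₁, h₁0, h₁', he₁⟩ ⟨ha₂, h₂0, h₂', he₂⟩ =>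
    eventuallyEq_of_apply_eq_mul hc0 hc1 (hbounds.mono fun _ => And.right) hlam
      ha₁.differentiableAt ha₂.differentiableAt h₁0 h₂0 h₁' h₂' he₁ he₂⟩
  obtain ⟨r, hr, hball⟩ := nhds_basis_ball.eventually_iff.1 (hf.eventually_analyticAt.and hbounds)
  obtain ⟨h, ha, h0, h', he⟩ := exists_linearization_on_ball hr
    (fun z hz => (hball hz).1.differentiableAt.differentiableWithinAt)
    (hf' ▸ hf.differentiableAt.hasDerivAt) hf0 hlam hc0 hc1.le hcl hK
    (fun z hz => (hball hz).2.1) fun z hz => (hball hz).2.2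
  exact ⟨h, ha, h0, h', eventually_of_mem (ball_mem_nhds 0 hr) he⟩
end

section
/- Let ρ : ℝ → [-∞, ∞) be upper semicontinuous with the property that for any α and any real r̃ < ρ(α) there is a sequence αₙ → α with ρ(αₙ) = r̃. Fix α₀ with ρ(α₀) > -∞, ε₀ > 0, and a strictly decreasing sequence of reals (ρₙ)_{n≥1} with limit ρ_∞ < ρ(α₀) and ρ₁ < ρ(α₀). Then there exist sequences (αₙ) and (εₙ) with: α_{n+1} ∈ (αₙ - εₙ, αₙ + εₙ), ρ(α_{n+1}) = ρ_{n+1}, [α_{n+1} - ε_{n+1}, α_{n+1} + ε_{n+1}] ⊂ [αₙ - εₙ, αₙ + εₙ], εₙ → 0, and ρ(α) < ρₙ for all α with |α - α_{n+1}| ≤ ε_{n+1}. Moreover, the limit α_∞ of (αₙ) satisfies ρ(α_∞) = ρ_∞. -/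
open Filter Set

lemma usc_nbhd (ρ : ℝ → EReal)
    (husc : ∀ α : ℝ, Filter.limsup ρ (nhdsWithin α {α}ᶜ) ≤ ρ α)
    (α : ℝ) (r : ℝ) (h : ρ α < (r : EReal)) :
    ∃ δ : ℝ, 0 < δ ∧ ∀ β, |β - α| ≤ δ → ρ β < (r : EReal) := by
  have h1 : ∀ᶠ β in nhdsWithin α {α}ᶜ, ρ β < (r : EReal) :=
    Filter.eventually_lt_of_limsup_lt (lt_of_le_of_lt (husc α) h)
  rw [eventually_nhdsWithin_iff] at h1
  have h2 : ∀ᶠ β in nhds α, ρ β < (r : EReal) := by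
    filter_upwards [h1] with β hβ
    by_cases hb : β = α
    · subst hb; exact h
    · exact hβ hb
  rw [Metric.eventually_nhds_iff] at h2
  obtain ⟨ε, hε, hball⟩ := h2
  exact ⟨ε / 2, by linarith, fun β hβ => hball (by rw [Real.dist_eq]; linarith)⟩

theorem stmt15 (ρ : ℝ → EReal)
    (htop : ∀ α : ℝ, ρ α < ⊤)
    (husc : ∀ α : ℝ, Filter.limsup ρ (nhdsWithin α {α}ᶜ) ≤ ρ α)
    (hdense : ∀ α : ℝ, ∀ rt : ℝ, (rt : EReal) < ρ α →
      ∃ a : ℕ → ℝ, Filter.Tendsto a Filter.atTop (nhds α) ∧ ∀ n, ρ (a n) = (rt : EReal))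
    (α₀ : ℝ) (hα₀ : ⊥ < ρ α₀) (ε₀ : ℝ) (hε₀ : 0 < ε₀)
    (ρs : ℕ → ℝ) (hanti : StrictAnti ρs) (ρinf : ℝ)
    (hlim : Filter.Tendsto ρs Filter.atTop (nhds ρinf))
    (hinf : (ρinf : EReal) < ρ α₀) (h1 : ((ρs 1 : ℝ) : EReal) < ρ α₀) :
    ∃ a e : ℕ → ℝ, a 0 = α₀ ∧ e 0 = ε₀ ∧ (∀ n, 0 < e n) ∧
      (∀ n, a (n + 1) ∈ Set.Ioo (a n - e n) (a n + e n)) ∧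
      (∀ n, ρ (a (n + 1)) = ((ρs (n + 1) : ℝ) : EReal)) ∧
      (∀ n, Set.Icc (a (n + 1) - e (n + 1)) (a (n + 1) + e (n + 1)) ⊆
        Set.Icc (a n - e n) (a n + e n)) ∧
      Filter.Tendsto e Filter.atTop (nhds 0) ∧
      (∀ n, ∀ β : ℝ, |β - a (n + 1)| ≤ e (n + 1) → ρ β < ((ρs n : ℝ) : EReal)) ∧
      ∃ αinf : ℝ, Filter.Tendsto a Filter.atTop (nhds αinf) ∧
        ρ αinf = ((ρinf : ℝ) : EReal) := by
  -- the one-step construction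
  have key : ∀ (n : ℕ) (p : ℝ × ℝ), ∃ q : ℝ × ℝ,
      (0 < p.2 → ((ρs (n + 1) : ℝ) : EReal) < ρ p.1 →
        0 < q.2 ∧ ((ρs (n + 2) : ℝ) : EReal) < ρ q.1 ∧
        q.1 ∈ Set.Ioo (p.1 - p.2) (p.1 + p.2) ∧
        ρ q.1 = ((ρs (n + 1) : ℝ) : EReal) ∧
        Set.Icc (q.1 - q.2) (q.1 + q.2) ⊆ Set.Icc (p.1 - p.2) (p.1 + p.2) ∧
        q.2 ≤ p.2 / 2 ∧
        ∀ β, |β - q.1| ≤ q.2 → ρ β < ((ρs n : ℝ) : EReal)) := by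
    intro n p
    by_cases hp : 0 < p.2 ∧ ((ρs (n + 1) : ℝ) : EReal) < ρ p.1
    swap
    · exact ⟨p, fun h1' h2' => absurd ⟨h1', h2'⟩ hp⟩
    obtain ⟨hpe, hpρ⟩ := hp
    obtain ⟨b, hb, hbρ⟩ := hdense p.1 (ρs (n + 1)) hpρ
    have : ∀ᶠ k in atTop, |b k - p.1| < p.2 / 2 := by
      have := Metric.tendsto_nhds.mp hb (p.2 / 2) (by linarith)
      simpa [Real.dist_eq] using this
    obtain ⟨k, hk⟩ := this.exists
    set α₁ := b k with hα₁
    have hρ₁ : ρ α₁ = ((ρs (n + 1) : ℝ) : EReal) := hbρ k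
    have hlt : ρ α₁ < ((ρs n : ℝ) : EReal) := by
      rw [hρ₁]; exact_mod_cast hanti (Nat.lt_succ_self n)
    obtain ⟨δ, hδ, hδρ⟩ := usc_nbhd ρ husc α₁ (ρs n) hlt
    set ε₁ := min δ (p.2 / 2 - |α₁ - p.1|) with hε₁
    refine ⟨(α₁, ε₁), fun _ _ => ?_⟩
    have habs := abs_lt.mp hk
    have habs' : |α₁ - p.1| < p.2 / 2 := hk
    have hε₁pos : 0 < ε₁ := lt_min hδ (by linarith)
    refine ⟨hε₁pos, ?_, ?_, hρ₁, ?_, ?_, ?_⟩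
    · rw [hρ₁]; exact_mod_cast hanti (by omega : n + 1 < n + 2)
    · exact mem_Ioo.mpr ⟨by linarith, by linarith⟩
    · intro β hβ
      simp only [mem_Icc] at hβ ⊢
      have h1 : |β - α₁| ≤ ε₁ := abs_le.mpr ⟨by linarith, by linarith⟩
      have h2 : ε₁ ≤ p.2 / 2 - |α₁ - p.1| := min_le_right _ _
      have h3 : |β - p.1| ≤ p.2 := by
        calc |β - p.1| ≤ |β - α₁| + |α₁ - p.1| := abs_sub_le _ _ _
          _ ≤ p.2 / 2 := by linarith
          _ ≤ p.2 := by linarith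
      have := abs_le.mp h3
      constructor <;> linarith
    · have h2 : ε₁ ≤ p.2 / 2 - |α₁ - p.1| := min_le_right _ _
      have := abs_nonneg (α₁ - p.1)
      linarith
    · intro β hβ
      exact hδρ β (le_trans hβ (min_le_left _ _))
  choose g hg using key
  -- the recursive sequence
  set f : ℕ → ℝ × ℝ := fun n => Nat.rec (α₀, ε₀) (fun n ih => g n ih) n with hf
  have hf0 : f 0 = (α₀, ε₀) := rfl
  have hfs : ∀ n, f (n + 1) = g n (f n) := fun n => rfl
  -- invariant
  have hinv : ∀ n, 0 < (f n).2 ∧ ((ρs (n + 1) : ℝ) : EReal) < ρ (f n).1 := by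
    intro n
    induction n with
    | zero => exact ⟨hε₀, h1⟩
    | succ n ih =>
      have := hg n (f n) ih.1 ih.2
      rw [← hfs n] at this
      exact ⟨this.1, this.2.1⟩
  have hstep : ∀ n, 0 < (f (n+1)).2 ∧ ((ρs (n + 2) : ℝ) : EReal) < ρ (f (n+1)).1 ∧
      (f (n+1)).1 ∈ Set.Ioo ((f n).1 - (f n).2) ((f n).1 + (f n).2) ∧
      ρ (f (n+1)).1 = ((ρs (n + 1) : ℝ) : EReal) ∧
      Set.Icc ((f (n+1)).1 - (f (n+1)).2) ((f (n+1)).1 + (f (n+1)).2) ⊆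
        Set.Icc ((f n).1 - (f n).2) ((f n).1 + (f n).2) ∧
      (f (n+1)).2 ≤ (f n).2 / 2 ∧
      ∀ β, |β - (f (n+1)).1| ≤ (f (n+1)).2 → ρ β < ((ρs n : ℝ) : EReal) := by
    intro n
    have := hg n (f n) (hinv n).1 (hinv n).2
    rw [← hfs n] at this
    exact this
  set a : ℕ → ℝ := fun n => (f n).1 with ha
  set e : ℕ → ℝ := fun n => (f n).2 with he
  have hepos : ∀ n, 0 < e n := fun n => (hinv n).1
  have hIoo : ∀ n, a (n + 1) ∈ Set.Ioo (a n - e n) (a n + e n) := fun n => (hstep n).2.2.1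
  have hρa : ∀ n, ρ (a (n + 1)) = ((ρs (n + 1) : ℝ) : EReal) := fun n => (hstep n).2.2.2.1
  have hIcc : ∀ n, Set.Icc (a (n + 1) - e (n + 1)) (a (n + 1) + e (n + 1)) ⊆
      Set.Icc (a n - e n) (a n + e n) := fun n => (hstep n).2.2.2.2.1
  have ehalf : ∀ n, e (n + 1) ≤ e n / 2 := fun n => (hstep n).2.2.2.2.2.1
  have hball : ∀ n, ∀ β : ℝ, |β - a (n + 1)| ≤ e (n + 1) → ρ β < ((ρs n : ℝ) : EReal) :=
    fun n => (hstep n).2.2.2.2.2.2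
  -- geometric bound on e
  have hgeo : ∀ n, e n ≤ ε₀ * (1 / 2) ^ n := by
    intro n
    induction n with
    | zero => simp [he, hf0]
    | succ n ih =>
      calc e (n + 1) ≤ e n / 2 := ehalf n
        _ ≤ ε₀ * (1 / 2) ^ n / 2 := by linarith
        _ = ε₀ * (1 / 2) ^ (n + 1) := by ring
  have hetends : Tendsto e atTop (nhds 0) := by
    apply squeeze_zero (fun n => (hepos n).le) hgeo
    simpa using (tendsto_pow_atTop_nhds_zero_of_lt_one (by norm_num : (0:ℝ) ≤ 1/2)
      (by norm_num)).const_mul ε₀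
  -- a is Cauchy
  have hcauchy : CauchySeq a := by
    apply cauchySeq_of_le_geometric (1/2) ε₀ (by norm_num)
    intro n
    rw [Real.dist_eq]
    have := hIoo n
    simp only [mem_Ioo] at this
    have h1 : |a (n + 1) - a n| ≤ e n := abs_le.mpr ⟨by linarith, by linarith⟩
    calc |a n - a (n + 1)| = |a (n + 1) - a n| := abs_sub_comm _ _
      _ ≤ e n := h1
      _ ≤ ε₀ * (1/2) ^ n := hgeo n
  obtain ⟨αinf, hαinf⟩ := cauchySeq_tendsto_of_complete hcauchy
  -- αinf in all intervals
  have hnest : ∀ m k, Set.Icc (a (m + k) - e (m + k)) (a (m + k) + e (m + k)) ⊆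
      Set.Icc (a m - e m) (a m + e m) := by
    intro m k
    induction k with
    | zero => exact subset_rfl
    | succ k ih => exact subset_trans (hIcc (m + k)) ih
  have hmem : ∀ m, αinf ∈ Set.Icc (a m - e m) (a m + e m) := by
    intro m
    apply isClosed_Icc.mem_of_tendsto hαinf
    filter_upwards [eventually_ge_atTop m] with j hj
    obtain ⟨k, rfl⟩ := Nat.exists_eq_add_of_le hj
    exact hnest m k ⟨by linarith [(hepos (m+k))], by linarith [(hepos (m+k))]⟩
  -- ρ αinf < ρs n for all n
  have hρlt : ∀ n, ρ αinf < ((ρs n : ℝ) : EReal) := by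
    intro n
    apply hball n
    have := hmem (n + 1)
    simp only [mem_Icc] at this
    exact abs_le.mpr ⟨by linarith, by linarith⟩
  -- coercion limit
  have hcoelim : Tendsto (fun n => ((ρs n : ℝ) : EReal)) atTop (nhds ((ρinf : ℝ) : EReal)) :=
    EReal.tendsto_coe.mpr hlim
  have hle : ρ αinf ≤ ((ρinf : ℝ) : EReal) :=
    ge_of_tendsto' hcoelim (fun n => (hρlt n).le)
  -- a n ≠ αinf
  have hne : ∀ n, a n ≠ αinf := by
    intro n hn
    cases n with
    | zero =>
      have ha0 : a 0 = α₀ := rfl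
      rw [ha0] at hn
      rw [← hn] at hle
      exact absurd hinf (not_lt.mpr hle)
    | succ m =>
      have := hρlt (m + 1)
      rw [← hn, hρa m] at this
      exact lt_irrefl _ this
  -- lower bound via limsup
  have hmap : Tendsto (fun n => a (n + 1)) atTop (nhdsWithin αinf {αinf}ᶜ) := by
    rw [tendsto_nhdsWithin_iff]
    constructor
    · exact hαinf.comp (tendsto_add_atTop_nat 1)
    · exact Eventually.of_forall fun n => hne (n + 1)
  have htendρ : Tendsto (fun n => ρ (a (n + 1))) atTop (nhds ((ρinf : ℝ) : EReal)) := by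
    have : (fun n => ρ (a (n + 1))) = fun n => ((ρs (n + 1) : ℝ) : EReal) := funext hρa
    rw [this]
    exact EReal.tendsto_coe.mpr (hlim.comp (tendsto_add_atTop_nat 1))
  have hge : ((ρinf : ℝ) : EReal) ≤ ρ αinf := by
    calc ((ρinf : ℝ) : EReal) = limsup (fun n => ρ (a (n + 1))) atTop := htendρ.limsup_eq.symm
      _ = limsup ρ (Filter.map (fun n => a (n + 1)) atTop) := rfl
      _ ≤ limsup ρ (nhdsWithin αinf {αinf}ᶜ) := limsup_le_limsup_of_le hmap
      _ ≤ ρ αinf := husc αinf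
  exact ⟨a, e, rfl, rfl, hepos, hIoo, hρa, hIcc, hetends, hball,
    αinf, hαinf, le_antisymm hle hge⟩
end

section
/- Suppose h and f are holomorphic near 0, h(0) = f(0) = 0, h'(0) = 1, 0 < |λ| < 1, and h(f(z)) = λh(z) near 0. If h is defined and injective on a neighborhood U of 0 with f(U) ⊂ U, then h extends uniquely to the entire basin of attraction A = {z : fⁿ(z) → 0} of 0 (assuming f is defined on all of A with f(A) ⊂ A) via h(z) = λ^{-n} h(fⁿ(z)) for n large, and the extension satisfies h(f(z)) = λh(z) on all of A. -/
/-!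
Once an orbit has entered `U` it stays there, and on `U` the functional equation gives
`h (fᵐ z) = λ^(m - n) h (fⁿ z)` for `n ≤ m`; hence `λ⁻ⁿ h (fⁿ z)` does not depend on the choice of
`n` with `fⁿ z ∈ U`, which defines the extension and makes the functional equation automatic.
Conversely any two solutions of `G (f z) = λ G z` on the forward-invariant basin satisfy
`G (fⁿ z) = λⁿ G z`, so agreeing on `U`, which every orbit in the basin eventually enters,
forces them to agree everywhere since `λ ≠ 0`.
-/

open Filter Set Function Topology

variable {X K : Type*}

def basin [TopologicalSpace X] (f : X → X) (p : X) : Set X :=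
  {z | Tendsto (fun n => f^[n] z) atTop (𝓝 p)}

theorem mapsTo_basin [TopologicalSpace X] (f : X → X) (p : X) :
    MapsTo f (basin f p) (basin f p) := fun z hz => by
  simpa only [basin, mem_ofPred_eq, iterate_succ_apply] using (tendsto_add_atTop_iff_nat 1).2 hz

theorem apply_iterate_eq_pow_mul_s19 [Monoid K] {f : X → X} {G : X → K} {lam : K} {S : Set X}
    (hS : MapsTo f S S) (hG : ∀ z ∈ S, G (f z) = lam * G z) {z : X} (hz : z ∈ S) :
    ∀ n : ℕ, G (f^[n] z) = lam ^ n * G z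
  | 0 => by simp
  | n + 1 => by
    rw [iterate_succ_apply', hG _ (hS.iterate n hz), apply_iterate_eq_pow_mul_s19 hS hG hz n,
      pow_succ', mul_assoc]

theorem eq_of_apply_iterate_eq [MonoidWithZero K] [IsCancelMulZero K] {f : X → X} {G₁ G₂ : X → K} {lam : K}
    {S : Set X} (hS : MapsTo f S S) (hlam : lam ≠ 0)
    (h₁ : ∀ z ∈ S, G₁ (f z) = lam * G₁ z) (h₂ : ∀ z ∈ S, G₂ (f z) = lam * G₂ z)
    {z : X} (hz : z ∈ S) {n : ℕ} (hn : G₁ (f^[n] z) = G₂ (f^[n] z)) : G₁ z = G₂ z :=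
  mul_left_cancel₀ (pow_ne_zero n hlam) <| by
    rwa [← apply_iterate_eq_pow_mul_s19 hS h₁ hz, ← apply_iterate_eq_pow_mul_s19 hS h₂ hz]

section Extension

variable [Field K]

open Classical in
noncomputable def koenigsExtension (f : X → X) (h : X → K) (lam : K) (U : Set X) (z : X) : K :=
  if hz : ∃ n, f^[n] z ∈ U then h (f^[hz.choose] z) / lam ^ hz.choose else 0

variable {f : X → X} {h : X → K} {lam : K} {U : Set X}
  (hU : MapsTo f U U) (hlin : ∀ z ∈ U, h (f z) = lam * h z) (hlam : lam ≠ 0)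
include hU hlin hlam

theorem div_pow_iterate_eq_of_le {z : X} {n m : ℕ} (hn : f^[n] z ∈ U) (hnm : n ≤ m) :
    h (f^[m] z) / lam ^ m = h (f^[n] z) / lam ^ n := by
  obtain ⟨k, rfl⟩ := Nat.exists_eq_add_of_le hnm
  rw [add_comm n k, iterate_add_apply, apply_iterate_eq_pow_mul_s19 hU hlin hn, pow_add]
  field_simp

theorem div_pow_iterate_eq {z : X} {n m : ℕ} (hn : f^[n] z ∈ U) (hm : f^[m] z ∈ U) :
    h (f^[n] z) / lam ^ n = h (f^[m] z) / lam ^ m := by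
  rcases le_total n m with hnm | hmn
  · exact (div_pow_iterate_eq_of_le hU hlin hlam hn hnm).symm
  · exact div_pow_iterate_eq_of_le hU hlin hlam hm hmn

theorem koenigsExtension_eq {z : X} {n : ℕ} (hn : f^[n] z ∈ U) :
    koenigsExtension f h lam U z = h (f^[n] z) / lam ^ n := by
  have hz : ∃ n, f^[n] z ∈ U := ⟨n, hn⟩
  rw [koenigsExtension, dif_pos hz]
  exact div_pow_iterate_eq hU hlin hlam hz.choose_spec hn

theorem koenigsExtension_eq_self {z : X} (hz : z ∈ U) : koenigsExtension f h lam U z = h z := by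
  simpa using koenigsExtension_eq hU hlin hlam (n := 0) hz

theorem koenigsExtension_apply {z : X} {n : ℕ} (hn : f^[n] z ∈ U) :
    koenigsExtension f h lam U (f z) = lam * koenigsExtension f h lam U z := by
  have hsucc : f^[n + 1] z ∈ U := by
    rw [iterate_succ_apply']
    exact hU hn
  rw [koenigsExtension_eq hU hlin hlam hsucc, koenigsExtension_eq hU hlin hlam (n := n)
    (by rwa [iterate_succ_apply] at hsucc), iterate_succ_apply, pow_succ]
  field_simp

end Extension

theorem stmt19_general (f h : ℂ → ℂ) (lam : ℂ)
    (hlam0 : 0 < ‖lam‖)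
    (U : Set ℂ) (hUopen : IsOpen U) (hU0 : (0 : ℂ) ∈ U)
    (hfU : Set.MapsTo f U U)
    (hlin : ∀ z ∈ U, h (f z) = lam * h z) :
    -- A is the basin of attraction of 0
    (∀ A : Set ℂ, A = {z : ℂ | Filter.Tendsto (fun n => f^[n] z) Filter.atTop (nhds 0)} →
      Set.MapsTo f A A ∧
      (∃ H : ℂ → ℂ,
        (∀ z ∈ U ∩ A, H z = h z) ∧
        (∀ z ∈ A, H (f z) = lam * H z) ∧
        (∀ z ∈ A, ∀ᶠ n in Filter.atTop, f^[n] z ∈ U ∧ H z = h (f^[n] z) / lam ^ n)) ∧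
      (∀ H₁ H₂ : ℂ → ℂ,
        ((∀ z ∈ U ∩ A, H₁ z = h z) ∧ ∀ z ∈ A, H₁ (f z) = lam * H₁ z) →
        ((∀ z ∈ U ∩ A, H₂ z = h z) ∧ ∀ z ∈ A, H₂ (f z) = lam * H₂ z) →
        ∀ z ∈ A, H₁ z = H₂ z)) := by
  rintro A rfl
  have hlam : lam ≠ 0 := norm_pos_iff.1 hlam0
  have hentry : ∀ z ∈ basin f 0, ∀ᶠ n in atTop, f^[n] z ∈ U :=
    fun z hz => hz.eventually (hUopen.mem_nhds hU0)
  refine ⟨mapsTo_basin f 0, ⟨koenigsExtension f h lam U,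
    fun z hz => koenigsExtension_eq_self hfU hlin hlam hz.1, fun z hz => ?_, fun z hz => ?_⟩, ?_⟩
  · obtain ⟨n, hn⟩ := (hentry z hz).exists
    exact koenigsExtension_apply hfU hlin hlam hn
  · exact (hentry z hz).mono fun n hn => ⟨hn, koenigsExtension_eq hfU hlin hlam hn⟩
  · rintro H₁ H₂ ⟨h₁U, h₁f⟩ ⟨h₂U, h₂f⟩ z hz
    obtain ⟨n, hn⟩ := (hentry z hz).exists
    have hnA := (mapsTo_basin f 0).iterate n hz
    exact eq_of_apply_iterate_eq (mapsTo_basin f 0) hlam h₁f h₂f hz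
      ((h₁U _ ⟨hn, hnA⟩).trans (h₂U _ ⟨hn, hnA⟩).symm)

/-- Extension of the Koenigs linearizing map to the whole basin of attraction
via `h(z) = λ⁻ⁿ h(fⁿ(z))`, and uniqueness of this extension. -/
theorem stmt19 (f h : ℂ → ℂ) (lam : ℂ)
    (hlam0 : 0 < ‖lam‖) (hlam1 : ‖lam‖ < 1)
    (hh0 : h 0 = 0) (hf0 : f 0 = 0) (hh1 : deriv h 0 = 1)
    (hha : AnalyticAt ℂ h 0) (hfa : AnalyticAt ℂ f 0)
    (U : Set ℂ) (hUopen : IsOpen U) (hU0 : (0 : ℂ) ∈ U)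
    (hfU : Set.MapsTo f U U)
    (hhinj : Set.InjOn h U)
    (hlin : ∀ z ∈ U, h (f z) = lam * h z) :
    -- A is the basin of attraction of 0
    (∀ A : Set ℂ, A = {z : ℂ | Filter.Tendsto (fun n => f^[n] z) Filter.atTop (nhds 0)} →
      Set.MapsTo f A A ∧
      (∃ H : ℂ → ℂ,
        (∀ z ∈ U ∩ A, H z = h z) ∧
        (∀ z ∈ A, H (f z) = lam * H z) ∧
        (∀ z ∈ A, ∀ᶠ n in Filter.atTop, f^[n] z ∈ U ∧ H z = h (f^[n] z) / lam ^ n)) ∧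
      (∀ H₁ H₂ : ℂ → ℂ,
        ((∀ z ∈ U ∩ A, H₁ z = h z) ∧ ∀ z ∈ A, H₁ (f z) = lam * H₁ z) →
        ((∀ z ∈ U ∩ A, H₂ z = h z) ∧ ∀ z ∈ A, H₂ (f z) = lam * H₂ z) →
        ∀ z ∈ A, H₁ z = H₂ z)) :=
  stmt19_general f h lam hlam0 U hUopen hU0 hfU hlin
end
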